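/- arXiv:1310.6727 — 2 statements merged into one kernel-verified Lean document; each statement's English description precedes it below -/
import Mathlib

section
/- Let K be a number field, T a finite set of places of K, ζ a generator of the torsion subgroup of O_T^×, and ε₁, …, ε_r elements of O_T^× generating O_T^× modulo torsion. Then for every Δ ∈ O_T^× and every integer M ≥ 1 there exist ω ∈ O_T^× and integers 0 ≤ k₀, k₁, …, k_r < M such that ω^M · Δ = ζ^{k₀} · ε₁^{k₁} ⋯ ε_r^{k_r}; in particular h(ω^M·Δ) ≤ M · Σ_{i=1}^r h(ε_i). -/
open scoped NNReal
open IsDedekindDomain NumberField Polynomial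

namespace Effective

noncomputable section

variable {K : Type*} [Field K] [NumberField K]

/-- The cardinality `N(v)` of the residue field at a finite place `v`. -/
def placeNorm (v : HeightOneSpectrum (𝓞 K)) : ℕ := Ideal.absNorm v.asIdeal

lemma placeNorm_ne_zero (v : HeightOneSpectrum (𝓞 K)) : (placeNorm v : ℝ≥0) ≠ 0 := by
  have : Finite (𝓞 K ⧸ v.asIdeal) := Ideal.finiteQuotientOfFreeOfNeBot v.asIdeal v.ne_bot
  simpa [placeNorm] using (Ideal.absNorm_ne_zero_iff v.asIdeal).mpr this

/-- The residue characteristic of a finite place. -/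
def resChar (v : HeightOneSpectrum (𝓞 K)) : ℕ := ringChar (𝓞 K ⧸ v.asIdeal)

/-- The normalized `v`-adic absolute value `|x|_v = N(v)^{-ord_v x}`. -/
def vAbs (v : HeightOneSpectrum (𝓞 K)) (x : K) : ℝ :=
  WithZeroMulInt.toNNReal (placeNorm_ne_zero v) (v.valuation K x)

/-- The absolute multiplicative Weil height of a point `(x 0, …, x (m-1)) ∈ Kᵐ`. -/
def mulHeight {m : ℕ} (x : Fin m → K) : ℝ :=
  ((∏ w : InfinitePlace K, (⨆ i, w (x i)) ^ w.mult) *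
      ∏ᶠ v : HeightOneSpectrum (𝓞 K), ⨆ i, vAbs v (x i)) ^
    ((Module.finrank ℚ K : ℝ)⁻¹)

/-- The absolute logarithmic Weil height of a point of `Kᵐ`. -/
def logHeight {m : ℕ} (x : Fin m → K) : ℝ := Real.log (mulHeight x)

/-- The absolute logarithmic Weil height of `α ∈ K`. -/
def logHeight₁ (α : K) : ℝ := logHeight ![1, α]

/-- The absolute multiplicative Weil height of `α ∈ K`. -/
def mulHeight₁ (α : K) : ℝ := mulHeight ![1, α]

/-- The absolute logarithmic Weil height of a polynomial, i.e. of the point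
`(1, c₀, …, c_n)` formed by `1` and its coefficients. -/
def polyLogHeight (f : K[X]) : ℝ :=
  logHeight (Fin.cons 1 fun i : Fin (f.natDegree + 1) => f.coeff i)

/-- The Sylvester matrix of two polynomials `p`, `q` with formal degrees `m`, `l`. -/
def sylvester (m l : ℕ) (p q : K[X]) : Matrix (Fin (l + m)) (Fin (l + m)) K :=
  Matrix.of fun i j =>
    if (i : ℕ) < l then
      (if (i : ℕ) ≤ (j : ℕ) ∧ (j : ℕ) ≤ (i : ℕ) + m then p.coeff (m + i - j) else 0)
    else
      (if (i : ℕ) - l ≤ (j : ℕ) ∧ (j : ℕ) ≤ ((i : ℕ) - l) + l then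
        q.coeff (l + ((i : ℕ) - l) - j) else 0)

/-- The discriminant of a polynomial over a field (of characteristic zero), defined by
`Δ(f) = (-1)^(n(n-1)/2) lc(f)⁻¹ Res(f, f')`. -/
def polyDisc (f : K[X]) : K :=
  (-1 : K) ^ (f.natDegree * (f.natDegree - 1) / 2) * f.leadingCoeff⁻¹ *
    (sylvester f.natDegree (f.natDegree - 1) f (derivative f)).det

/-- The binary form `Σ_{i=0}^n β_i X^{n-i} Y^i` of degree `n` with coefficients `β`. -/
def binForm (n : ℕ) (β : Fin (n + 1) → K) : MvPolynomial (Fin 2) K :=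
  ∑ i : Fin (n + 1),
    MvPolynomial.C (β i) * MvPolynomial.X 0 ^ (n - (i : ℕ)) * MvPolynomial.X 1 ^ (i : ℕ)

/-- The `i`-th coefficient `β_i` (coefficient of `X^{n-i} Y^i`) of a binary form of degree `n`. -/
def bfCoeff (n : ℕ) (G : MvPolynomial (Fin 2) K) (i : Fin (n + 1)) : K :=
  MvPolynomial.coeff (Finsupp.single 0 (n - (i : ℕ)) + Finsupp.single 1 (i : ℕ)) G

/-- The pullback `ψ*G (X,Y) = G(αX + βY, γX + δY)` of a binary form by a matrix
`ψ = (α β; γ δ)`. -/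
def pullback (ψ : Matrix (Fin 2) (Fin 2) K) (G : MvPolynomial (Fin 2) K) :
    MvPolynomial (Fin 2) K :=
  MvPolynomial.bind₁
    (fun j : Fin 2 => MvPolynomial.C (ψ j 0) * MvPolynomial.X 0 +
      MvPolynomial.C (ψ j 1) * MvPolynomial.X 1) G

open scoped Classical in
/-- The discriminant of the binary form with coefficient vector `β`; writing the form as
`Y^k · (homogenization of g)` with `g(X) = G(X,1)`, it is `Δ(g)` if `k = 0`, it is
`lc(g)² Δ(g)` if `k = 1`, and it is `0` if `k ≥ 2`. -/
def discBF (n : ℕ) (β : Fin (n + 1) → K) : K :=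
  let g : K[X] := ∑ i : Fin (n + 1), Polynomial.C (β i) * Polynomial.X ^ (n - (i : ℕ))
  if g.natDegree = n then polyDisc g
  else if g ≠ 0 ∧ g.natDegree = n - 1 then g.leadingCoeff ^ 2 * polyDisc g
  else 0

/-- The absolute logarithmic Weil height of a binary form of degree `n`, i.e. the height of
the point `(1, β₀, …, β_n)`. -/
def bfLogHeight (n : ℕ) (G : MvPolynomial (Fin 2) K) : ℝ :=
  logHeight (Fin.cons 1 (bfCoeff n G))

/-- The absolute multiplicative Weil height of a binary form of degree `n`. -/
def bfMulHeight (n : ℕ) (G : MvPolynomial (Fin 2) K) : ℝ :=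
  mulHeight (Fin.cons 1 (bfCoeff n G))

/-- The ring of `T`-integers of `K`, for a finite set `T` of finite places of `K`. -/
def SInt (T : Finset (HeightOneSpectrum (𝓞 K))) : Subalgebra (𝓞 K) K :=
  Set.integer (T : Set (HeightOneSpectrum (𝓞 K))) K

/-- `x ∈ K` is a unit of the ring of `T`-integers `O_T`. -/
def IsSUnit (T : Finset (HeightOneSpectrum (𝓞 K))) (x : K) : Prop :=
  x ∈ SInt T ∧ ∃ y ∈ SInt T, x * y = 1

/-- The class number `h_T` of the ring of `T`-integers. -/
def classNum (T : Finset (HeightOneSpectrum (𝓞 K))) : ℕ :=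
  Nat.card (ClassGroup (SInt T))

/-- `λ_T = log₂ h_T`. -/
def lam (T : Finset (HeightOneSpectrum (𝓞 K))) : ℝ := Real.logb 2 (classNum T)

/-- `N_T`, the product of the residue field cardinalities of the finite places in `T`. -/
def normProd (T : Finset (HeightOneSpectrum (𝓞 K))) : ℕ := ∏ v ∈ T, placeNorm v

/-- `n_T`, the product of the logarithms of the residue field cardinalities of the finite
places in `T`. -/
def logProd (T : Finset (HeightOneSpectrum (𝓞 K))) : ℝ := ∏ v ∈ T, Real.log (placeNorm v)

/-- The maximum of the residue characteristics of the finite places in `T`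
(an empty maximum being `1`). -/
def maxResChar (T : Finset (HeightOneSpectrum (𝓞 K))) : ℕ := max 1 (T.sup resChar)

variable (K) in
/-- The absolute value of the discriminant of `K` over `ℚ`. -/
def absDiscr : ℕ := (NumberField.discr K).natAbs

/-- A Weierstrass curve over `K` has good reduction at a finite place `v` if some
change of variables makes all its coefficients `v`-integral and its discriminant a `v`-unit. -/
def GoodReductionAt (W : WeierstrassCurve K) (v : HeightOneSpectrum (𝓞 K)) : Prop :=
  ∃ C : WeierstrassCurve.VariableChange K,
    v.valuation K (C • W).a₁ ≤ 1 ∧ v.valuation K (C • W).a₂ ≤ 1 ∧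
    v.valuation K (C • W).a₃ ≤ 1 ∧ v.valuation K (C • W).a₄ ≤ 1 ∧
    v.valuation K (C • W).a₆ ≤ 1 ∧ v.valuation K (C • W).Δ = 1

/-- Good reduction outside a finite set `S` of finite places. -/
def GoodReductionOutside (W : WeierstrassCurve K) (S : Finset (HeightOneSpectrum (𝓞 K))) :
    Prop :=
  ∀ v : HeightOneSpectrum (𝓞 K), v ∉ S → GoodReductionAt W v

/-- Two Weierstrass curves over `K` are `K`-isomorphic if they are related by an admissible
change of variables. -/
def WIso (W W' : WeierstrassCurve K) : Prop :=
  ∃ C : WeierstrassCurve.VariableChange K, C • W = W'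

/-- The Weierstrass curve `Y² = f(X)` attached to a cubic polynomial `f`. -/
def curveOf (f : K[X]) : WeierstrassCurve K :=
  ⟨0, f.coeff 2, 0, f.coeff 1, f.coeff 0⟩

/-- The group of `T`-units of `Kˣ`. -/
def SUnitGroup (T : Finset (HeightOneSpectrum (𝓞 K))) : Subgroup Kˣ :=
  Set.unit (T : Set (HeightOneSpectrum (𝓞 K))) K

/-- `x ∈ Kˣ` is a torsion element. -/
def IsTorsionUnit (x : Kˣ) : Prop := ∃ n : ℕ, n ≠ 0 ∧ x ^ n = 1

/-- The family `ε` consists of `T`-units and generates the group of `T`-units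
modulo its torsion subgroup. -/
def GeneratesModTorsion (T : Finset (HeightOneSpectrum (𝓞 K))) {r : ℕ}
    (ε : Fin r → Kˣ) : Prop :=
  (∀ i, ε i ∈ SUnitGroup T) ∧
    ∀ x ∈ SUnitGroup T, ∃ (t : Kˣ) (k : Fin r → ℤ),
      t ∈ SUnitGroup T ∧ IsTorsionUnit t ∧ x = t * ∏ i, ε i ^ k i

/-- `ζ` is a generator of the torsion subgroup of the group of `T`-units. -/
def GeneratesTorsion (T : Finset (HeightOneSpectrum (𝓞 K))) (ζ : Kˣ) : Prop :=
  ζ ∈ SUnitGroup T ∧ IsTorsionUnit ζ ∧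
    ∀ x ∈ SUnitGroup T, IsTorsionUnit x → x ∈ Subgroup.zpowers ζ

end

end Effective

/-!
Write `Δ = ζ ^ b * ∏ εᵢ ^ aᵢ` and divide every exponent by `M` with remainder: then
`ω = ζ ^ (-⌊b / M⌋) * ∏ εᵢ ^ (-⌊aᵢ / M⌋)` does it. For the height bound,
`logHeight₁` is `Height.logHeight₁ / [K : ℚ]`, hence nonnegative, subadditive, multiplied by `n`
under `n`-th powers, and zero at roots of unity, so `h(ζ ^ k₀ * ∏ εᵢ ^ kᵢ) ≤ ∑ kᵢ h(εᵢ)`.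
-/

theorem zpow_neg_ediv_pow_mul_zpow {G : Type*} [Group G] (x : G) (a : ℤ) (M : ℕ) :
    (x ^ (-(a / M))) ^ M * x ^ a = x ^ (a % M) := by
  rw [← zpow_natCast, ← zpow_mul, ← zpow_add, Int.emod_def]
  ring_nf

theorem exists_pow_mul_zpow_mul_prod_zpow_eq {G : Type*} [CommGroup G] {H : Subgroup G}
    {ι : Type*} [Fintype ι] {ζ : G} {ε : ι → G} (hζ : ζ ∈ H) (hε : ∀ i, ε i ∈ H)
    (b : ℤ) (a : ι → ℤ) {M : ℕ} (hM : 0 < M) :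
    ∃ ω ∈ H, ∃ (k₀ : ℕ) (k : ι → ℕ), k₀ < M ∧ (∀ i, k i < M) ∧
      ω ^ M * (ζ ^ b * ∏ i, ε i ^ a i) = ζ ^ k₀ * ∏ i, ε i ^ k i := by
  have hnat (c : ℤ) : ((c % M).toNat : ℤ) = c % M :=
    Int.toNat_of_nonneg (Int.emod_nonneg c (by omega))
  have hlt (c : ℤ) : (c % M).toNat < M := by
    have := Int.emod_lt_of_pos c (by omega : (0 : ℤ) < M)
    omega
  refine ⟨ζ ^ (-(b / M)) * ∏ i, ε i ^ (-(a i / M)),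
    H.mul_mem (H.zpow_mem hζ _) (H.prod_mem fun i _ => H.zpow_mem (hε i) _),
    (b % M).toNat, fun i => (a i % M).toNat, hlt b, fun i => hlt (a i), ?_⟩
  rw [mul_pow, mul_mul_mul_comm, zpow_neg_ediv_pow_mul_zpow, ← Finset.prod_pow,
    ← Finset.prod_mul_distrib]
  simp only [zpow_neg_ediv_pow_mul_zpow]
  simp only [← zpow_natCast, hnat]

namespace Effective

open IsDedekindDomain NumberField

variable {K : Type*} [Field K] [NumberField K]

lemma vAbs_eq_finitePlace_mk (v : HeightOneSpectrum (𝓞 K)) (x : K) :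
    vAbs v x = FinitePlace.mk v x :=
  (FinitePlace.norm_embedding' v x).symm

lemma mulHeight_eq_rpow {m : ℕ} {x : Fin m → K} (hx : x ≠ 0) :
    mulHeight x = Height.mulHeight x ^ (Module.finrank ℚ K : ℝ)⁻¹ := by
  rw [NumberField.mulHeight_eq hx, mulHeight,
    ← finprod_comp_equiv FinitePlace.equivHeightOneSpectrum.symm]
  simp only [vAbs_eq_finitePlace_mk]
  rfl

lemma logHeight₁_eq_inv_finrank_mul (α : K) :
    logHeight₁ α = (Module.finrank ℚ K : ℝ)⁻¹ * Height.logHeight₁ α := by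
  have h : ![1, α] ≠ 0 := fun h => one_ne_zero (congrFun h 0)
  rw [logHeight₁, logHeight, mulHeight_eq_rpow h, Real.log_rpow (Height.mulHeight_pos _),
    Height.logHeight₁_eq_logHeight, Height.logHeight_swap, Height.logHeight_eq_log_mulHeight]

lemma logHeight₁_nonneg (α : K) : 0 ≤ logHeight₁ α := by
  rw [logHeight₁_eq_inv_finrank_mul]
  exact mul_nonneg (by positivity) (Height.zero_le_logHeight₁ α)

lemma logHeight₁_mul_le (α β : K) : logHeight₁ (α * β) ≤ logHeight₁ α + logHeight₁ β := by
  simp only [logHeight₁_eq_inv_finrank_mul, ← mul_add]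
  exact mul_le_mul_of_nonneg_left (Height.logHeight₁_mul_le α β) (by positivity)

lemma logHeight₁_prod_le {ι : Type*} (s : Finset ι) (x : ι → K) :
    logHeight₁ (∏ i ∈ s, x i) ≤ ∑ i ∈ s, logHeight₁ (x i) := by
  simp only [logHeight₁_eq_inv_finrank_mul, ← Finset.mul_sum]
  exact mul_le_mul_of_nonneg_left (Height.logHeight₁_prod_le s x) (by positivity)

lemma logHeight₁_pow (α : K) (n : ℕ) : logHeight₁ (α ^ n) = n * logHeight₁ α := by
  rw [logHeight₁_eq_inv_finrank_mul, logHeight₁_eq_inv_finrank_mul, Height.logHeight₁_pow]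
  ring

lemma logHeight₁_eq_zero_of_pow_eq_one {α : K} {n : ℕ} (hn : n ≠ 0) (h : α ^ n = 1) :
    logHeight₁ α = 0 := by
  have h₁ : logHeight₁ (1 : K) = 0 := by
    rw [logHeight₁_eq_inv_finrank_mul, Height.logHeight₁_one, mul_zero]
  have := logHeight₁_pow α n
  rw [h, h₁] at this
  exact (mul_eq_zero.mp this.symm).resolve_left (by exact_mod_cast hn)

lemma logHeight₁_prod_pow_le {ι : Type*} (s : Finset ι) (x : ι → K) {k : ι → ℕ} {M : ℕ}
    (hk : ∀ i ∈ s, k i ≤ M) :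
    logHeight₁ (∏ i ∈ s, x i ^ k i) ≤ M * ∑ i ∈ s, logHeight₁ (x i) := by
  rw [Finset.mul_sum]
  refine (logHeight₁_prod_le s _).trans (Finset.sum_le_sum fun i hi => ?_)
  rw [logHeight₁_pow]
  exact mul_le_mul_of_nonneg_right (by exact_mod_cast hk i hi) (logHeight₁_nonneg _)

lemma logHeight₁_pow_mul_prod_pow_le {ι : Type*} (s : Finset ι) {ζ : K} {n : ℕ} (hn : n ≠ 0)
    (hζ : ζ ^ n = 1) (k₀ : ℕ) (x : ι → K) {k : ι → ℕ} {M : ℕ} (hk : ∀ i ∈ s, k i ≤ M) :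
    logHeight₁ (ζ ^ k₀ * ∏ i ∈ s, x i ^ k i) ≤ M * ∑ i ∈ s, logHeight₁ (x i) :=
  calc logHeight₁ (ζ ^ k₀ * ∏ i ∈ s, x i ^ k i)
      ≤ k₀ * logHeight₁ ζ + logHeight₁ (∏ i ∈ s, x i ^ k i) :=
        logHeight₁_pow ζ k₀ ▸ logHeight₁_mul_le _ _
    _ ≤ M * ∑ i ∈ s, logHeight₁ (x i) := by
        rw [logHeight₁_eq_zero_of_pow_eq_one hn hζ, mul_zero, zero_add]
        exact logHeight₁_prod_pow_le s x hk

end Effective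

open Effective IsDedekindDomain NumberField in
/-- Reduction of a `T`-unit modulo `M`-th powers: exponents can be reduced to lie in `[0, M)`,
with height of the reduced unit bounded by `M·Σ h(εᵢ)`. -/
theorem unit_reduction (K : Type*) [Field K] [NumberField K]
    (T : Finset (HeightOneSpectrum (𝓞 K))) (ζ : Kˣ) (r : ℕ) (ε : Fin r → Kˣ)
    (hζ : GeneratesTorsion T ζ) (hε : GeneratesModTorsion T ε) :
    ∀ Δ ∈ SUnitGroup T, ∀ M : ℕ, 1 ≤ M →
      ∃ ω ∈ SUnitGroup T, ∃ (k₀ : ℕ) (k : Fin r → ℕ),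
        k₀ < M ∧ (∀ i, k i < M) ∧
        ω ^ M * Δ = ζ ^ k₀ * ∏ i, ε i ^ k i ∧
        logHeight₁ ((ω ^ M * Δ : Kˣ) : K) ≤ (M : ℝ) * ∑ i, logHeight₁ ((ε i : K)) := by
  obtain ⟨hζT, ⟨n, hn, hζn⟩, hζgen⟩ := hζ
  intro Δ hΔ M hM
  obtain ⟨t, a, htT, ht, rfl⟩ := hε.2 Δ hΔ
  obtain ⟨b, rfl⟩ := Subgroup.mem_zpowers_iff.mp (hζgen t htT ht)
  obtain ⟨ω, hωT, k₀, k, hk₀, hk, hω⟩ :=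
    exists_pow_mul_zpow_mul_prod_zpow_eq hζT hε.1 b a hM
  refine ⟨ω, hωT, k₀, k, hk₀, hk, hω, ?_⟩
  rw [hω]
  push_cast
  exact logHeight₁_pow_mul_prod_pow_le _ hn (by rw [← Units.val_pow_eq_pow_val, hζn, Units.val_one]) k₀ _
    fun i _ => (hk i).le
end

section
/- Let K be a number field and G a binary form of degree n ≥ 2 over K with nonzero discriminant. Then H(Δ(G)) ≤ 2^{3n(n−1)} · H(G)^{2n−2}. -/
open scoped NNReal
open IsDedekindDomain NumberField Polynomial

/-!
Write `d = deg g` for `g(X) = G(X, 1)`. Since `Δ(g) = ± lc(g)⁻¹ Res(g, g')`, dividing the first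
column of the Sylvester matrix of `g, g'` by `lc(g)` expresses `Δ(g)` as `±` a determinant of
order `2d - 1` whose first column has entries in `{0, 1, d}` and whose other entries are
coefficients of `g` or of `g'`. Expanding it bounds `|Δ(g)|_v` by
`(2d - 1)! d^(2d - 1) H_v^(2d - 2)` at an archimedean place and by `H_v^(2d - 2)` at a finite
place, where `H_v` is the local height of `(1, β)`; when the form has degree `n - 1` in `X`
the factor `lc(g)²` raises the exponent to `2n - 2`. Multiplying the local bounds over all
places gives the theorem, because `(2d - 1)! d^(2d - 1) ≤ 2^(3d(d - 1))`.
-/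

open IsDedekindDomain NumberField Polynomial Finset
open scoped Nat

namespace AbsoluteValue

variable {R S : Type*} [CommRing R] [Nontrivial R] [CommRing S] [LinearOrder S]
  [IsStrictOrderedRing S] {n : Type*} [Fintype n] [DecidableEq n]

theorem det_le_factorial_mul_prod (abv : AbsoluteValue R S) {A : Matrix n n R} {c : n → S}
    (hc : ∀ i j, abv (A i j) ≤ c j) :
    abv A.det ≤ (Fintype.card n)! * ∏ j, c j :=
  calc
    abv A.det = abv (∑ σ : Equiv.Perm n, Equiv.Perm.sign σ • ∏ j, A (σ j) j) :=
      congr_arg abv (Matrix.det_apply _)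
    _ ≤ ∑ σ : Equiv.Perm n, abv (Equiv.Perm.sign σ • ∏ j, A (σ j) j) := abv.sum_le _ _
    _ = ∑ σ : Equiv.Perm n, ∏ j, abv (A (σ j) j) :=
      sum_congr rfl fun σ _ => by rw [abv.map_units_int_smul, abv.map_prod]
    _ ≤ ∑ _σ : Equiv.Perm n, ∏ j, c j := by gcongr with σ _ j; simp [hc]
    _ = (Fintype.card n)! * ∏ j, c j := by simp [Fintype.card_perm]

end AbsoluteValue

theorem IsNonarchimedean.apply_det_le_prod {R S : Type*} [CommRing R] [Nontrivial R] [CommRing S]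
    [LinearOrder S] [IsStrictOrderedRing S] {n : Type*} [Fintype n] [DecidableEq n]
    {abv : AbsoluteValue R S} (habv : IsNonarchimedean abv) {A : Matrix n n R} {c : n → S}
    (hc : ∀ i j, abv (A i j) ≤ c j) :
    abv A.det ≤ ∏ j, c j := by
  obtain ⟨σ, -, hσ⟩ := habv.finset_image_add_of_nonempty
    (fun σ : Equiv.Perm n => Equiv.Perm.sign σ • ∏ j, A (σ j) j) univ_nonempty
  rw [Matrix.det_apply]
  refine hσ.trans ?_
  rw [abv.map_units_int_smul, abv.map_prod]
  gcongr with j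
  exact hc _ _

theorem Matrix.det_updateCol_div {K n : Type*} [Field K] [Fintype n] [DecidableEq n]
    (A : Matrix n n K) (j : n) (a : K) :
    (A.updateCol j fun i => A i j / a).det = A.det / a := by
  simp_rw [div_eq_inv_mul]
  exact (Matrix.det_updateCol_smul A j a⁻¹ fun i => A i j).trans
    (by rw [Matrix.updateCol_eq_self])

theorem Nat.sq_le_two_pow {m : ℕ} (hm : 4 ≤ m) : m ^ 2 ≤ 2 ^ m := by
  induction m, hm using Nat.le_induction with
  | base => norm_num
  | succ m hm ih =>
    calc (m + 1) ^ 2 ≤ 2 * m ^ 2 := by nlinarith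
      _ ≤ 2 ^ (m + 1) := by rw [_root_.pow_succ' 2 m]; exact Nat.mul_le_mul_left 2 ih

theorem Nat.factorial_mul_pow_le_two_pow (m : ℕ) :
    (2 * m - 1)! * m ^ (2 * m - 1) ≤ 2 ^ (3 * m * (m - 1)) := by
  rcases lt_or_ge m 4 with hm | hm
  · interval_cases m <;> decide
  calc (2 * m - 1)! * m ^ (2 * m - 1) ≤ (2 * m) ^ (2 * m - 1) * m ^ (2 * m - 1) := by
        gcongr
        exact (Nat.factorial_le_pow _).trans (Nat.pow_le_pow_left (by omega) _)
    _ = (2 * m ^ 2) ^ (2 * m - 1) := by rw [← mul_pow]; ring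
    _ ≤ (2 ^ (m + 1)) ^ (2 * m - 1) := by
        gcongr
        rw [_root_.pow_succ' 2 m]
        exact Nat.mul_le_mul_left 2 (Nat.sq_le_two_pow hm)
    _ = 2 ^ ((m + 1) * (2 * m - 1)) := by rw [pow_mul]
    _ ≤ 2 ^ (3 * m * (m - 1)) := by
        refine Nat.pow_le_pow_right two_pos ?_
        obtain ⟨t, rfl⟩ : ∃ t, m = t + 4 := ⟨m - 4, by omega⟩
        rw [show 2 * (t + 4) - 1 = 2 * t + 7 by omega, show t + 4 - 1 = t + 3 by omega]
        nlinarith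

namespace Effective

section Discriminant

variable {K : Type*} [Field K]

theorem abv_sylvester_le (abv : AbsoluteValue K ℝ) {m l : ℕ} {p q : K[X]} {B : ℝ}
    (hp : ∀ k, abv (p.coeff k) ≤ B) (hq : ∀ k, abv (q.coeff k) ≤ B) (i j : Fin (l + m)) :
    abv (sylvester m l p q i j) ≤ B := by
  have hB : 0 ≤ B := (abv.nonneg _).trans (hp 0)
  simp only [sylvester, Matrix.of_apply]
  split_ifs <;> simp [hp, hq, hB]

theorem exists_sylvester_derivative_apply_zero (g : K[X]) (hg : 0 < g.natDegree)
    (i : Fin (g.natDegree - 1 + g.natDegree)) :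
    ∃ k ≤ g.natDegree,
      sylvester g.natDegree (g.natDegree - 1) g (derivative g) i ⟨0, by omega⟩ =
        k * g.leadingCoeff := by
  simp only [sylvester, Matrix.of_apply]
  split_ifs
  · refine ⟨1, hg, ?_⟩
    rw [show g.natDegree + i - 0 = g.natDegree by omega, coeff_natDegree, Nat.cast_one, one_mul]
  · exact ⟨0, by omega, by simp⟩
  · refine ⟨g.natDegree, le_rfl, ?_⟩
    rw [show g.natDegree - 1 + (i - (g.natDegree - 1)) - 0 = g.natDegree - 1 by omega,
      coeff_derivative, Nat.sub_add_cancel hg, mul_comm]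
    simp [Nat.cast_sub hg]
  · exact ⟨0, by omega, by simp⟩

theorem abv_coeff_derivative_le (abv : AbsoluteValue K ℝ) {g : K[X]} {B c : ℝ}
    (hB : ∀ k, abv (g.coeff k) ≤ B) (hc : ∀ k ≤ g.natDegree, abv (k : K) ≤ c) (k : ℕ) :
    abv ((derivative g).coeff k) ≤ c * B := by
  have hB₀ : 0 ≤ B := (abv.nonneg _).trans (hB 0)
  have hc₀ : 0 ≤ c := (abv.nonneg _).trans (hc 0 (Nat.zero_le _))
  rw [coeff_derivative]
  rcases le_or_gt (k + 1) g.natDegree with hk | hk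
  · rw [abv.map_mul, mul_comm c]
    exact mul_le_mul (hB _) (mod_cast hc (k + 1) hk) (abv.nonneg _) hB₀
  · simp [coeff_eq_zero_of_natDegree_lt hk, mul_nonneg hc₀ hB₀]

/-- The determinant bound `hdet` holds with `κ = (2 deg g - 1)!` for every absolute value and
with `κ = 1` for a nonarchimedean one. -/
theorem abv_polyDisc_le_of_abv_det_le (abv : AbsoluteValue K ℝ) {g : K[X]}
    (hg : 0 < g.natDegree) {B c κ : ℝ} (hc : 1 ≤ c)
    (hnat : ∀ k ≤ g.natDegree, abv (k : K) ≤ c) (hB : ∀ k, abv (g.coeff k) ≤ B)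
    (hdet : ∀ (A : Matrix (Fin (g.natDegree - 1 + g.natDegree))
        (Fin (g.natDegree - 1 + g.natDegree)) K) (b : Fin (g.natDegree - 1 + g.natDegree) → ℝ),
      (∀ i j, abv (A i j) ≤ b j) → abv A.det ≤ κ * ∏ j, b j) :
    abv (polyDisc g) ≤ κ * c ^ (2 * g.natDegree - 1) * B ^ (2 * g.natDegree - 2) := by
  set d := g.natDegree
  set S := sylvester d (d - 1) g (derivative g)
  set j₀ : Fin (d - 1 + d) := ⟨0, by omega⟩
  have hB₀ : 0 ≤ B := (abv.nonneg _).trans (hB 0)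
  have hlc : g.leadingCoeff ≠ 0 := leadingCoeff_ne_zero.2 (ne_zero_of_natDegree_gt hg)
  have hdisc : polyDisc g = (-1) ^ (d * (d - 1) / 2) *
      (S.updateCol j₀ fun i => S i j₀ / g.leadingCoeff).det := by
    rw [Matrix.det_updateCol_div, polyDisc, div_eq_inv_mul, mul_assoc]
  have hentry (i j) : abv ((S.updateCol j₀ fun i => S i j₀ / g.leadingCoeff) i j) ≤
      Function.update (fun _ => c * B) j₀ c j := by
    rcases eq_or_ne j j₀ with rfl | hj
    · obtain ⟨k, hk, hS⟩ := exists_sylvester_derivative_apply_zero g hg i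
      replace hS : S i j₀ = k * g.leadingCoeff := hS
      rw [Matrix.updateCol_self, hS, mul_div_cancel_right₀ _ hlc, Function.update_self]
      exact hnat k hk
    · simpa [hj] using abv_sylvester_le abv (fun k => (hB k).trans (le_mul_of_one_le_left hB₀ hc))
        (abv_coeff_derivative_le abv hB hnat) i j
  rw [hdisc, abv.map_mul, abv.map_pow, abv.map_neg, abv.map_one, one_pow, one_mul]
  refine (hdet _ _ hentry).trans_eq ?_
  rw [prod_update_of_mem (mem_univ j₀), prod_const, card_sdiff, card_univ, Fintype.card_fin,
    inter_univ, card_singleton, show d - 1 + d - 1 = 2 * d - 2 by omega,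
    show 2 * d - 1 = 2 * d - 2 + 1 by omega]
  ring

theorem abv_polyDisc_le (abv : AbsoluteValue K ℝ) {g : K[X]} (hg : 0 < g.natDegree) {B : ℝ}
    (hB : ∀ k, abv (g.coeff k) ≤ B) :
    abv (polyDisc g) ≤ ((2 * g.natDegree - 1)! * g.natDegree ^ (2 * g.natDegree - 1) : ℕ) *
      B ^ (2 * g.natDegree - 2) := by
  have hcard : g.natDegree - 1 + g.natDegree = 2 * g.natDegree - 1 := by omega
  push_cast
  exact abv_polyDisc_le_of_abv_det_le abv hg (mod_cast hg)
    (fun k hk => (abv.apply_nat_le_self k).trans (mod_cast hk)) hB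
    fun A b hb => by simpa [hcard] using abv.det_le_factorial_mul_prod hb

theorem abv_polyDisc_le_of_isNonarchimedean {abv : AbsoluteValue K ℝ}
    (habv : IsNonarchimedean abv) {g : K[X]} (hg : 0 < g.natDegree) {B : ℝ}
    (hB : ∀ k, abv (g.coeff k) ≤ B) :
    abv (polyDisc g) ≤ B ^ (2 * g.natDegree - 2) := by
  simpa using abv_polyDisc_le_of_abv_det_le abv hg le_rfl
    (fun k _ => habv.apply_natCast_le_one) hB (κ := 1)
    fun A b hb => by simpa using habv.apply_det_le_prod hb

theorem abv_coeff_sum_C_mul_X_pow_sub_le (abv : AbsoluteValue K ℝ) {n : ℕ}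
    {β : Fin (n + 1) → K} {B : ℝ} (hβ : ∀ i, abv (β i) ≤ B) (k : ℕ) :
    abv ((∑ i : Fin (n + 1), C (β i) * X ^ (n - (i : ℕ))).coeff k) ≤ B := by
  simp only [finsetSum_coeff, coeff_C_mul_X_pow]
  rcases le_or_gt k n with hk | hk
  · rw [sum_eq_single ⟨n - k, by omega⟩
      (fun i _ hi => if_neg fun h => hi (Fin.ext (by simp; omega))) (by simp),
      if_pos (by simp; omega)]
    exact hβ _
  · rw [sum_eq_zero fun i _ => if_neg (by omega), abv.map_zero]
    exact (abv.nonneg _).trans (hβ 0)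

theorem abv_discBF_le (abv : AbsoluteValue K ℝ) {n : ℕ} (hn : 2 ≤ n) (β : Fin (n + 1) → K)
    {B C : ℝ} (hC : 0 ≤ C) (hβ : ∀ i, abv (β i) ≤ B)
    (hdisc : ∀ g : K[X], 0 < g.natDegree → g.natDegree ≤ n → (∀ k, abv (g.coeff k) ≤ B) →
      abv (polyDisc g) ≤ C * B ^ (2 * g.natDegree - 2)) :
    abv (discBF n β) ≤ C * B ^ (2 * n - 2) := by
  have hB : 0 ≤ B := (abv.nonneg _).trans (hβ 0)
  have hcoeff := abv_coeff_sum_C_mul_X_pow_sub_le abv hβ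
  dsimp only [discBF]
  split_ifs with hdeg hdeg'
  · simpa [hdeg] using hdisc _ (by omega) hdeg.le hcoeff
  · rw [abv.map_mul, abv.map_pow]
    calc _ ≤ B ^ 2 * (C * B ^ (2 * (n - 1) - 2)) := by
          gcongr
          · exact hcoeff _
          · simpa [hdeg'.2] using hdisc _ (by omega) (by omega) hcoeff
      _ = C * B ^ (2 * n - 2) := by
          rw [show 2 * n - 2 = 2 * (n - 1) - 2 + 2 by omega]
          ring
  · simp only [abv.map_zero]
    positivity

end Discriminant

section Height

variable {K : Type*} [Field K] [NumberField K]

theorem vAbs_eq_adicAbv (v : HeightOneSpectrum (𝓞 K)) (x : K) :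
    vAbs v x = NumberField.HeightOneSpectrum.adicAbv K v x := rfl

theorem hasFiniteMulSupport_max_vAbs_one (x : K) :
    (fun v : HeightOneSpectrum (𝓞 K) => max (vAbs v x) 1).HasFiniteMulSupport := by
  rcases eq_or_ne x 0 with rfl | hx
  · simp [vAbs_eq_adicAbv, Function.hasFiniteMulSupport_one]
  · have := (FinitePlace.hasFiniteMulSupport hx).comp_of_injective
      FinitePlace.equivHeightOneSpectrum.symm.injective
    simp_rw [vAbs_eq_adicAbv, ← FinitePlace.norm_embedding]
    exact this.max Function.hasFiniteMulSupport_one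

theorem hasFiniteMulSupport_iSup_vAbs {m : ℕ} {x : Fin m → K} (hx : ∃ i, x i = 1) :
    (fun v : HeightOneSpectrum (𝓞 K) => ⨆ i, vAbs v (x i)).HasFiniteMulSupport := by
  obtain ⟨i₀, hi₀⟩ := hx
  have : Nonempty (Fin m) := ⟨i₀⟩
  have h (v : HeightOneSpectrum (𝓞 K)) : ⨆ i, vAbs v (x i) = ⨆ i, max (vAbs v (x i)) 1 := by
    have hone : 1 ≤ ⨆ i, vAbs v (x i) :=
      Finite.le_ciSup_of_le i₀ (by simp [hi₀, vAbs_eq_adicAbv])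
    exact le_antisymm (ciSup_mono (Finite.bddAbove_range _) fun i => le_max_left _ _)
      (ciSup_le fun i => max_le (Finite.le_ciSup_of_le i le_rfl) hone)
  simp_rw [h]
  exact Function.HasFiniteMulSupport.iSup fun i => hasFiniteMulSupport_max_vAbs_one (x i)

theorem mulHeight₁_le_of_forall_place_le {m : ℕ} {x : Fin m → K} (hx : ∃ i, x i = 1) {a : K}
    {C : ℝ} (hC : 1 ≤ C) (e : ℕ)
    (harch : ∀ w : InfinitePlace K, w a ≤ C * (⨆ i, w (x i)) ^ e)
    (hfin : ∀ v : HeightOneSpectrum (𝓞 K), vAbs v a ≤ (⨆ i, vAbs v (x i)) ^ e) :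
    mulHeight₁ a ≤ C * mulHeight x ^ e := by
  obtain ⟨i₀, hi₀⟩ := hx
  have arch_nonneg {k : ℕ} (y : Fin k → K) (w : InfinitePlace K) : 0 ≤ ⨆ i, w (y i) :=
    Real.iSup_nonneg_of_nonnegHomClass w _
  have fin_nonneg {k : ℕ} (y : Fin k → K) :
      0 ≤ ∏ᶠ v : HeightOneSpectrum (𝓞 K), ⨆ i, vAbs v (y i) :=
    finprod_nonneg fun v =>
      Real.iSup_nonneg_of_nonnegHomClass (NumberField.HeightOneSpectrum.adicAbv K v) _
  set D := Module.finrank ℚ K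
  set A := ∏ w : InfinitePlace K, (⨆ i, w (x i)) ^ w.mult
  set F := ∏ᶠ v : HeightOneSpectrum (𝓞 K), ⨆ i, vAbs v (x i)
  have hA : ∏ w : InfinitePlace K, (⨆ i, w (![1, a] i)) ^ w.mult ≤ C ^ D * A ^ e :=
    calc _ ≤ ∏ w : InfinitePlace K, (C * (⨆ i, w (x i)) ^ e) ^ w.mult := by
          refine prod_le_prod (fun w _ => pow_nonneg (arch_nonneg _ w) _) fun w _ =>
            pow_le_pow_left₀ (arch_nonneg _ w) ?_ _
          refine ciSup_le (Fin.forall_fin_two.2 ⟨?_, by simpa using harch w⟩)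
          simpa using one_le_mul_of_one_le_of_one_le hC
            (one_le_pow₀ (Finite.le_ciSup_of_le i₀ (by simp [hi₀])))
      _ = C ^ D * A ^ e := by
          simp_rw [mul_pow, prod_mul_distrib, prod_pow_eq_pow_sum, InfinitePlace.sum_mult_eq,
            ← pow_mul, mul_comm e, pow_mul, prod_pow]
          rfl
  have hF : ∏ᶠ v : HeightOneSpectrum (𝓞 K), ⨆ i, vAbs v (![1, a] i) ≤ F ^ e := by
    rw [finprod_pow (hasFiniteMulSupport_iSup_vAbs ⟨i₀, hi₀⟩)]
    refine finprod_le_finprod (hasFiniteMulSupport_iSup_vAbs ⟨0, rfl⟩)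
      (fun v => Real.iSup_nonneg_of_nonnegHomClass (NumberField.HeightOneSpectrum.adicAbv K v) _)
      ((hasFiniteMulSupport_iSup_vAbs ⟨i₀, hi₀⟩).pow e) fun v => ?_
    refine ciSup_le (Fin.forall_fin_two.2 ⟨?_, by simpa using hfin v⟩)
    simpa [vAbs_eq_adicAbv] using
      one_le_pow₀ (Finite.le_ciSup_of_le i₀ (by simp [hi₀]))
  have hA₀ : 0 ≤ A := prod_nonneg fun w _ => pow_nonneg (arch_nonneg _ w) _
  have hF₀ : 0 ≤ F := fin_nonneg x
  calc mulHeight₁ a ≤ (C ^ D * A ^ e * F ^ e) ^ (D⁻¹ : ℝ) :=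
        Real.rpow_le_rpow
          (mul_nonneg (prod_nonneg fun w _ => pow_nonneg (arch_nonneg _ w) _) (fin_nonneg _))
          (mul_le_mul hA hF (fin_nonneg _) (by positivity)) (by positivity)
    _ = C * mulHeight x ^ e := by
        rw [mul_assoc, ← mul_pow, Real.mul_rpow (by positivity) (by positivity),
          Real.pow_rpow_inv_natCast (by positivity) Module.finrank_pos.ne',
          ← Real.rpow_pow_comm (by positivity)]
        rfl

end Height

end Effective

open Effective IsDedekindDomain NumberField in
theorem disc_height_bound_general (K : Type*) [Field K] [NumberField K] (n : ℕ) (hn : 2 ≤ n)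
    (β : Fin (n + 1) → K) :
    mulHeight₁ (discBF n β) ≤
      2 ^ (3 * n * (n - 1)) * mulHeight (Fin.cons 1 β) ^ (2 * n - 2) := by
  refine mulHeight₁_le_of_forall_place_le ⟨0, rfl⟩ (one_le_pow₀ one_le_two) _ (fun w => ?_)
    fun v => ?_
  · refine abv_discBF_le w.1 hn β (by positivity) (fun i => Finite.le_ciSup_of_le i.succ le_rfl)
      fun g hg hgn hB => (abv_polyDisc_le w.1 hg hB).trans ?_
    refine mul_le_mul_of_nonneg_right ?_ (pow_nonneg ((w.1.nonneg _).trans (hB 0)) _)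
    calc (((2 * g.natDegree - 1)! * g.natDegree ^ (2 * g.natDegree - 1) : ℕ) : ℝ)
        ≤ ((2 ^ (3 * g.natDegree * (g.natDegree - 1)) : ℕ) : ℝ) :=
          mod_cast Nat.factorial_mul_pow_le_two_pow _
      _ ≤ 2 ^ (3 * n * (n - 1)) := by
          push_cast
          exact pow_le_pow_right₀ one_le_two (by gcongr)
  · refine (abv_discBF_le (NumberField.HeightOneSpectrum.adicAbv K v) hn β zero_le_one
      (fun i => ?_) fun g hg _ hB => ?_).trans_eq (one_mul _)
    · exact Finite.le_ciSup_of_le i.succ le_rfl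
    · simpa using abv_polyDisc_le_of_isNonarchimedean
        (NumberField.HeightOneSpectrum.isNonarchimedean_adicAbv K v) hg hB

open Effective IsDedekindDomain NumberField in
/-- Height bound for the discriminant of a binary form. -/
theorem disc_height_bound (K : Type*) [Field K] [NumberField K] (n : ℕ) (hn : 2 ≤ n)
    (β : Fin (n + 1) → K) (hΔ : discBF n β ≠ 0) :
    mulHeight₁ (discBF n β) ≤
      2 ^ (3 * n * (n - 1)) * mulHeight (Fin.cons 1 β) ^ (2 * n - 2) :=
  disc_height_bound_general K n hn β
end
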